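/- Let I be an ideal on ℕ, let S be a metric space, x a sequence in S such that {n : x_n ∈ K} ∈ I* for some compact K ⊆ S. Then Γ_x(I) is the smallest closed set C ⊆ S with the property that {n : x_n ∈ U} ∈ I* for every open set U containing C. -/

import Mathlib

/-- An ideal on ℕ: closed under subsets and finite unions, contains all finite
sets, and is proper. -/
def IsIdeal (I : Set (Set ℕ)) : Prop :=
  (∀ ⦃A B : Set ℕ⦄, A ∈ I → B ⊆ A → B ∈ I) ∧
  (∀ ⦃A B : Set ℕ⦄, A ∈ I → B ∈ I → A ∪ B ∈ I) ∧
  (∀ A : Set ℕ, A.Finite → A ∈ I) ∧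
  (Set.univ : Set ℕ) ∉ I

/-- Translation invariance of an ideal on ℕ: `(A + k) ∩ ℕ ∈ I`. -/
def TransInv (I : Set (Set ℕ)) : Prop :=
  ∀ A ∈ I, ∀ k : ℤ, {n : ℕ | ∃ a ∈ A, (a : ℤ) + k = (n : ℤ)} ∈ I

/-- η is an I-cluster point of x. -/
def IClusterPt {S : Type*} [TopologicalSpace S] (I : Set (Set ℕ)) (x : ℕ → S) (η : S) : Prop :=
  ∀ U : Set S, IsOpen U → η ∈ U → {n : ℕ | x n ∈ U} ∉ I

/-- x is I-convergent to η. -/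
def IConv {S : Type*} [TopologicalSpace S] (I : Set (Set ℕ)) (x : ℕ → S) (η : S) : Prop :=
  ∀ U : Set S, IsOpen U → η ∈ U → {n : ℕ | x n ∈ U}ᶜ ∈ I

/-- The I-limit inferior of a real sequence. -/
noncomputable def ILiminf (I : Set (Set ℕ)) (x : ℕ → ℝ) : ℝ :=
  sInf {r : ℝ | {n : ℕ | x n > r} ∉ I}

/-- The I-limit superior of a real sequence. -/
noncomputable def ILimsup (I : Set (Set ℕ)) (x : ℕ → ℝ) : ℝ :=
  - ILiminf I (fun n => - x n)

/-!
Through the dual filter `I*`, the `I`-cluster points of `x` are the cluster points of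
`map x I*`, and "`{n : xₙ ∈ U} ∈ I*` for every open `U ⊇ C`" says `Tendsto x I* (𝓝ˢ C)`.
Cluster sets of filters are closed; a filter eventually inside a compact set tends to the
neighbourhoods of its cluster set; and in a regular space a cluster point of a filter tending
to `𝓝ˢ C` lies in the closure of `C`.
-/

open Filter Topology

namespace IsIdeal

variable {I : Set (Set ℕ)}

def dualFilter (hI : IsIdeal I) : Filter ℕ :=
  comk (· ∈ I) (hI.2.2.1 ∅ Set.finite_empty) (fun _ ht _ hs => hI.1 ht hs)
    (fun _ hs _ ht => hI.2.1 hs ht)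

theorem mem_dualFilter (hI : IsIdeal I) {A : Set ℕ} : A ∈ hI.dualFilter ↔ Aᶜ ∈ I :=
  Iff.rfl

variable {S : Type*} [TopologicalSpace S]

theorem iClusterPt_iff_mapClusterPt (hI : IsIdeal I) {x : ℕ → S} {η : S} :
    IClusterPt I x η ↔ MapClusterPt η hI.dualFilter x := by
  simp only [(nhds_basis_opens η).mapClusterPt_iff_frequently, Filter.Frequently,
    Filter.Eventually, mem_dualFilter, Set.compl_ofPred, not_not, IClusterPt, and_imp]
  exact forall_congr' fun _ => forall_comm

theorem tendsto_dualFilter_nhdsSet_iff (hI : IsIdeal I) {x : ℕ → S} {C : Set S} :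
    Tendsto x hI.dualFilter (𝓝ˢ C) ↔
      ∀ U : Set S, IsOpen U → C ⊆ U → {n : ℕ | x n ∈ U}ᶜ ∈ I := by
  simp only [(hasBasis_nhdsSet C).tendsto_right_iff, and_imp]
  rfl

end IsIdeal

theorem MapClusterPt.mem_closure_of_tendsto_nhdsSet {S ι : Type*} [TopologicalSpace S]
    [RegularSpace S] {l : Filter ι} {x : ι → S} {η : S} {C : Set S}
    (hη : MapClusterPt η l x) (hx : Tendsto x l (𝓝ˢ C)) : η ∈ closure C := by
  by_contra hηC
  exact (ClusterPt.mono hη hx).ne ((disjoint_nhdsSet_nhds.2 hηC).symm.eq_bot)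

theorem cluster_points_smallest_closed {S : Type*} [MetricSpace S]
    (I : Set (Set ℕ)) (hI : IsIdeal I) (x : ℕ → S) (K : Set S)
    (hK : IsCompact K) (hKx : {n : ℕ | x n ∈ K}ᶜ ∈ I) :
    IsClosed {η : S | IClusterPt I x η} ∧
    (∀ U : Set S, IsOpen U → {η : S | IClusterPt I x η} ⊆ U → {n : ℕ | x n ∈ U}ᶜ ∈ I) ∧
    (∀ C : Set S, IsClosed C →
      (∀ U : Set S, IsOpen U → C ⊆ U → {n : ℕ | x n ∈ U}ᶜ ∈ I) →
      {η : S | IClusterPt I x η} ⊆ C) := by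
  have hΓ : {η : S | IClusterPt I x η} = {η | MapClusterPt η hI.dualFilter x} :=
    Set.ext fun _ => hI.iClusterPt_iff_mapClusterPt
  simp only [← hI.tendsto_dualFilter_nhdsSet_iff, hΓ]
  refine ⟨isClosed_setOfPred_clusterPt, ?_, fun C hC hxC η hη => ?_⟩
  · exact hK.tendsto_nhdsSet_of_mapClusterPt (hI.mem_dualFilter.2 hKx) fun _ _ => id
  · exact hC.closure_eq ▸ hη.mem_closure_of_tendsto_nhdsSet hxC
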